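/- Let R be a ring and P a prime ideal that is locally closed in Spec(R) (the intersection of all prime ideals properly containing P is strictly larger than P). Then P is left primitive if and only if the Jacobson radical of R/P is zero. -/

import Mathlib

universe u

/-- An ideal is two-sided if it is closed under right multiplication. -/
def Ideal.IsTwoSided' {R : Type u} [Ring R] (P : Ideal R) : Prop :=
  ∀ a ∈ P, ∀ r : R, a * r ∈ P

/-- A (two-sided) ideal is prime in the noncommutative sense. -/
def Ideal.IsPrimeNC {R : Type u} [Ring R] (P : Ideal R) : Prop :=
  P ≠ ⊤ ∧ ∀ a b : R, (∀ r : R, a * r * b ∈ P) → a ∈ P ∨ b ∈ P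

/-- An ideal `P` of `R` is left primitive if it is the annihilator of a simple left
`R`-module. -/
def Ideal.IsLeftPrimitive {R : Type u} [Ring R] (P : Ideal R) : Prop :=
  ∃ (M : Type u) (_ : AddCommGroup M) (_ : Module R M),
    IsSimpleModule R M ∧ ∀ r : R, r ∈ P ↔ ∀ m : M, r • m = 0

/-!
If `P` is the annihilator of a simple module `M`, then `P` is the intersection of the maximal
left ideals `ann(x)`, `x ≠ 0`, so `J(R/P) = 0`. Conversely, for every maximal left ideal
`m ⊇ P` the annihilator of `R/m` is a prime ideal containing `P` and contained in `m`. If none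
of them were equal to `P`, the intersection of the primes properly above `P` would lie in the
intersection of these `m`, which is `P` when `J(R/P) = 0`; local closedness forbids this.
-/

open Module

variable {R : Type u} [Ring R]

theorem Ideal.isTwoSided'_iff_isTwoSided {P : Ideal R} : P.IsTwoSided' ↔ P.IsTwoSided := by
  rw [Ideal.isTwoSided_iff]
  exact ⟨fun h _ b ha ↦ h _ ha b, fun h _ ha b ↦ h b ha⟩

theorem Ideal.isLeftPrimitive_iff {P : Ideal R} :
    P.IsLeftPrimitive ↔ ∃ (M : Type u) (_ : AddCommGroup M) (_ : Module R M),
      IsSimpleModule R M ∧ annihilator R M = P := by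
  simp only [Ideal.IsLeftPrimitive, SetLike.ext_iff, Module.mem_annihilator, Iff.comm]

namespace IsSimpleModule

variable {M : Type*} [AddCommGroup M] [Module R M] [IsSimpleModule R M]

theorem annihilator_isPrimeNC : (annihilator R M).IsPrimeNC := by
  refine ⟨?_, fun a b hab ↦ or_iff_not_imp_right.mpr fun hb ↦ ?_⟩
  · rw [Ne, annihilator_eq_top_iff, not_subsingleton_iff_nontrivial]
    exact nontrivial R M
  · obtain ⟨x, hx⟩ : ∃ x : M, b • x ≠ 0 := by simpa [Module.mem_annihilator] using hb
    -- `b • x` generates the simple module `M`, and `a * r * b` kills `x` for every `r`.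
    refine Module.mem_annihilator.mpr fun y ↦ ?_
    obtain ⟨r, rfl⟩ := toSpanSingleton_surjective R hx y
    simpa [mul_smul] using Module.mem_annihilator.mp (hab r) x

theorem jacobson_annihilator : (annihilator R M).jacobson = annihilator R M := by
  refine le_antisymm (fun r hr ↦ Module.mem_annihilator.mpr fun x ↦ ?_) Ideal.le_jacobson
  obtain rfl | hx := eq_or_ne x 0
  · exact smul_zero r
  have hle : annihilator R M ≤ LinearMap.ker (LinearMap.toSpanSingleton R M x) :=
    fun s hs ↦ Module.mem_annihilator.mp hs x
  simpa using Ideal.mem_sInf.mp hr ⟨hle, ker_toSpanSingleton_isMaximal R hx⟩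

end IsSimpleModule

theorem Ideal.annihilator_quotient_le (I : Ideal R) :
    annihilator R (R ⧸ I) ≤ I := fun r hr ↦ by
  have := Module.mem_annihilator.mp hr (Submodule.Quotient.mk 1)
  rwa [← Submodule.Quotient.mk_smul, Submodule.Quotient.mk_eq_zero, smul_eq_mul, mul_one] at this

theorem Ideal.le_annihilator_quotient {P I : Ideal R} [P.IsTwoSided] (h : P ≤ I) :
    P ≤ annihilator R (R ⧸ I) := fun r hr ↦ by
  refine Module.mem_annihilator.mpr fun x ↦ ?_
  obtain ⟨s, rfl⟩ := Submodule.Quotient.mk_surjective I x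
  rw [← Submodule.Quotient.mk_smul, Submodule.Quotient.mk_eq_zero]
  exact h (P.mul_mem_right s hr)

theorem exists_isMaximal_annihilator_quotient_eq {P : Ideal R} [P.IsTwoSided]
    (hj : P.jacobson = P)
    (hlc : sInf {Q : Ideal R | Q.IsTwoSided' ∧ Q.IsPrimeNC ∧ P < Q} ≠ P) :
    ∃ m : Ideal R, m.IsMaximal ∧ annihilator R (R ⧸ m) = P := by
  by_contra! hne
  refine hlc (le_antisymm ?_ (le_sInf fun Q hQ ↦ hQ.2.2.le))
  calc sInf {Q : Ideal R | Q.IsTwoSided' ∧ Q.IsPrimeNC ∧ P < Q}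
      ≤ P.jacobson := le_sInf fun m (⟨hPm, hm⟩ : P ≤ m ∧ m.IsMaximal) ↦ by
        have : IsSimpleModule R (R ⧸ m) := isSimpleModule_iff_isCoatom.mpr hm.out
        have hlt : P < annihilator R (R ⧸ m) :=
          (Ideal.le_annihilator_quotient hPm).lt_of_ne (hne m hm).symm
        refine (sInf_le ?_).trans (Ideal.annihilator_quotient_le m)
        exact ⟨Ideal.isTwoSided'_iff_isTwoSided.mpr inferInstance,
          IsSimpleModule.annihilator_isPrimeNC, hlt⟩
    _ = P := hj

theorem locallyClosed_primitive_iff_jacobson_general {R : Type u} [Ring R] (P : Ideal R)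
    (h2 : P.IsTwoSided')
    (hlc : sInf {Q : Ideal R | Q.IsTwoSided' ∧ Q.IsPrimeNC ∧ P < Q} ≠ P) :
    P.IsLeftPrimitive ↔ P.jacobson = P := by
  have := Ideal.isTwoSided'_iff_isTwoSided.mp h2
  rw [Ideal.isLeftPrimitive_iff]
  constructor
  · rintro ⟨M, _, _, _, rfl⟩
    exact IsSimpleModule.jacobson_annihilator
  · intro hj
    obtain ⟨m, hm, rfl⟩ := exists_isMaximal_annihilator_quotient_eq hj hlc
    exact ⟨R ⧸ m, _, _, isSimpleModule_iff_isCoatom.mpr hm.out, rfl⟩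

/-- Let `P` be a prime ideal that is locally closed in `Spec R`, i.e. the intersection of the
prime ideals properly containing `P` is strictly larger than `P`.  Then `P` is left primitive
if and only if the Jacobson radical of `R/P` is zero; the latter is expressed as
`P.jacobson = P`, since `Ideal.jacobson P` is the intersection of the maximal left ideals
containing `P`, i.e. the preimage in `R` of the Jacobson radical of `R/P`. -/
theorem locallyClosed_primitive_iff_jacobson {R : Type u} [Ring R] (P : Ideal R)
    (h2 : P.IsTwoSided') (hp : P.IsPrimeNC)
    (hlc : sInf {Q : Ideal R | Q.IsTwoSided' ∧ Q.IsPrimeNC ∧ P < Q} ≠ P) :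
    P.IsLeftPrimitive ↔ P.jacobson = P :=
  locallyClosed_primitive_iff_jacobson_general P h2 hlc
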